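/- arXiv:2405.09505 — 3 statements merged into one kernel-verified Lean document; each statement's English description precedes it below -/
import Mathlib

section
/- Let F ∈ ℂ[x_1,…,x_r] be a smooth homogeneous polynomial of degree d ≥ 3, where r ≥ 2. Suppose every element of Aut(F) is a semi-permutation matrix (a monomial matrix: a matrix with exactly one nonzero entry in each row and each column). Then |Aut(F)| ≤ d^r·r!, and equality occurs if and only if F is isomorphic to the Fermat form x_1^d + x_2^d + ⋯ + x_r^d. -/
/-!
Every automorphism is `diag(t) · P_σ`, and two automorphisms with the same permutation `σ` differ
by a diagonal one, so `|Aut F| ≤ r! · |Δ|` for the group `Δ` of diagonal automorphisms.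
Smoothness at the coordinate point `e_i` forces a monomial `x_i^(d-1) x_(j i)` into `F`, so every
`t ∈ Δ` solves `t_i^(d-1) t_(j i) = 1`. Splitting off from the functional graph of `j` either a
point outside its image (at most `d - 1` values for that coordinate) or a cycle of length `L` (at
most `|(1-d)^L - 1| ≤ d^L` values, strictly fewer when `L ≥ 2`) shows that this system has at
most `d^r` solutions, and fewer unless `j = id`. In the equality case `Δ` is all of `μ_d^r`, which
forces `F = ∑ c_i x_i^d` with all `c_i ≠ 0`, a rescaled Fermat form; conversely the Fermat form
has the `d^r · r!` monomial automorphisms with `d`-th roots of unity as entries.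
-/

open MvPolynomial

/-- The action of a matrix on a multivariate polynomial: `A(F) = F(∑ a₁ᵢxᵢ, …, ∑ aᵣᵢxᵢ)`. -/
noncomputable def matAct {r : ℕ} (A : Matrix (Fin r) (Fin r) ℂ) (F : MvPolynomial (Fin r) ℂ) :
    MvPolynomial (Fin r) ℂ :=
  MvPolynomial.bind₁ (fun i => ∑ j, MvPolynomial.C (A i j) * MvPolynomial.X j) F

lemma matAct_one {r : ℕ} (F : MvPolynomial (Fin r) ℂ) : matAct 1 F = F := by
  have : (fun i : Fin r => ∑ j, MvPolynomial.C ((1 : Matrix (Fin r) (Fin r) ℂ) i j)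
      * MvPolynomial.X j) = MvPolynomial.X := by
    funext i
    simp [Matrix.one_apply, apply_ite (MvPolynomial.C (σ := Fin r) (R := ℂ)), ite_mul]
  rw [matAct, this, MvPolynomial.bind₁_X_left]
  rfl

lemma matAct_mul {r : ℕ} (A B : Matrix (Fin r) (Fin r) ℂ) (F : MvPolynomial (Fin r) ℂ) :
    matAct (A * B) F = matAct B (matAct A F) := by
  unfold matAct
  rw [MvPolynomial.bind₁_bind₁]
  have h : (fun i : Fin r => (bind₁ fun i => ∑ j, C (B i j) * X j) (∑ j, C (A i j) * X j))
      = fun i : Fin r => ∑ j, C ((A * B) i j) * X j := by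
    funext i
    rw [map_sum]
    simp only [map_mul, bind₁_C_right, bind₁_X_right, algebraMap_eq, Matrix.mul_apply,
      Finset.mul_sum, map_sum, Finset.sum_mul, C_mul]
    rw [Finset.sum_comm]
    simp [mul_assoc]
  rw [h]

/-- The automorphism group of a form, as a subgroup of `GL`. -/
noncomputable def formAut {r : ℕ} (F : MvPolynomial (Fin r) ℂ) : Subgroup (GL (Fin r) ℂ) where
  carrier := {A | matAct (A : Matrix (Fin r) (Fin r) ℂ) F = F}
  one_mem' := by simpa using matAct_one F
  mul_mem' := by
    intro A B hA hB
    simp only [Set.mem_setOf_eq] at *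
    rw [Units.val_mul, matAct_mul, hA, hB]
  inv_mem' := by
    intro A hA
    simp only [Set.mem_setOf_eq] at *
    conv_lhs => rw [← hA]
    rw [← matAct_mul, Units.mul_inv, matAct_one]

/-- `F` is a smooth form: the origin is the only common zero of all partial derivatives. -/
def IsSmoothForm {r : ℕ} (F : MvPolynomial (Fin r) ℂ) : Prop :=
  ∀ x : Fin r → ℂ, (∀ i, MvPolynomial.eval x (MvPolynomial.pderiv i F) = 0) → x = 0

/-- Two forms are isomorphic if they are in the same `GL`-orbit. -/
def FormIso {r : ℕ} (F G : MvPolynomial (Fin r) ℂ) : Prop :=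
  ∃ A : GL (Fin r) ℂ, matAct (A : Matrix (Fin r) (Fin r) ℂ) F = G

/-- The Fermat form of degree `d` in `r` variables. -/
noncomputable def fermatForm (r d : ℕ) : MvPolynomial (Fin r) ℂ :=
  ∑ i, MvPolynomial.X i ^ d

/-- A semi-permutation (monomial) matrix: a diagonal matrix up to permutation of columns. -/
def IsSemiPermutation {r : ℕ} (A : Matrix (Fin r) (Fin r) ℂ) : Prop :=
  ∃ (σ : Equiv.Perm (Fin r)) (dvec : Fin r → ℂ),
    (∀ i, dvec i ≠ 0) ∧ ∀ i j, A i j = if σ i = j then dvec i else 0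

open Function

theorem Subgroup.finite_and_card_le_card_mul {G X : Type*} [Group G] [Finite X]
    {H K : Subgroup G} [Finite H] (hHK : H ≤ K) (f : K → X)
    (hf : ∀ a b : K, f a = f b → (b * a⁻¹ : G) ∈ H) :
    Finite K ∧ Nat.card K ≤ Nat.card H * Nat.card X := by
  set H' := H.subgroupOf K
  have hinj : Injective fun q : K ⧸ H' => f q.out⁻¹ := by
    intro q q' h
    rw [← q.out_eq, ← q'.out_eq, QuotientGroup.eq, Subgroup.mem_subgroupOf]
    simpa using inv_mem (hf _ _ h)
  have hcard : Nat.card K = Nat.card H * H'.index := by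
    rw [← H'.card_mul_index, Nat.card_congr (Subgroup.subgroupOfEquivOfLe hHK).toEquiv]
  have : Finite (K ⧸ H') := Finite.of_injective _ hinj
  refine ⟨Nat.finite_of_card_ne_zero ?_, ?_⟩ <;> rw [hcard]
  · exact mul_ne_zero Nat.card_pos.ne' H'.index_ne_zero_of_finite
  · exact Nat.mul_le_mul_left _ (Nat.card_le_card_of_injective _ hinj)

theorem finite_and_card_le_of_injOn_of_pow_eq_one {G R : Type*} [CommRing R] [IsDomain R]
    {S : Set G} (φ : G → Rˣ) (m : ℕ) [NeZero m] (hpow : ∀ t ∈ S, φ t ^ m = 1)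
    (hinj : S.InjOn φ) : Finite S ∧ Nat.card S ≤ m := by
  let g : S → rootsOfUnity m R := fun t => ⟨φ t, (mem_rootsOfUnity m _).2 (hpow t t.2)⟩
  have hg : Injective g := fun a b h => Subtype.ext (hinj a.2 b.2 (congrArg Subtype.val h))
  exact ⟨Finite.of_injective g hg,
    (Nat.card_le_card_of_injective g hg).trans (card_rootsOfUnity R m)⟩

theorem natAbs_neg_pow_sub_one_le (e L : ℕ) : ((-(e : ℤ)) ^ L - 1).natAbs ≤ e ^ L + 1 := by
  have : |(-(e : ℤ)) ^ L| = (e : ℤ) ^ L := by rw [abs_pow, abs_neg, Nat.abs_cast]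
  zify
  calc |(-(e : ℤ)) ^ L - 1| ≤ |(-(e : ℤ)) ^ L| + |1| := abs_sub _ _
    _ = (e : ℤ) ^ L + 1 := by rw [this, abs_one]

theorem neg_pow_ne_one {e L : ℕ} (he : 2 ≤ e) (hL : L ≠ 0) : (-(e : ℤ)) ^ L ≠ 1 := fun h => by
  have := congrArg Int.natAbs h
  rw [Int.natAbs_pow, Int.natAbs_neg, Int.natAbs_natCast, Int.natAbs_one, Nat.pow_eq_one] at this
  omega

theorem pow_add_one_lt_add_one_pow {e L : ℕ} (he : 1 ≤ e) (hL : 2 ≤ L) :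
    e ^ L + 1 < (e + 1) ^ L := by
  induction L, hL using Nat.le_induction with
  | base => nlinarith
  | succ L hL ih =>
    have : 1 ≤ e ^ L := Nat.one_le_pow _ _ he
    rw [pow_succ, pow_succ]
    nlinarith

theorem mem_periodicPts_of_injOn {α : Type*} {f : α → α} {x : α} {s : Set α} (hs : s.Finite)
    (hmaps : Set.MapsTo f s s) (hinj : s.InjOn f) (hx : x ∈ s) : x ∈ periodicPts f := by
  have := hs.to_subtype
  obtain ⟨n, hn, hper⟩ := (hmaps.restrict_inj.2 hinj).mem_periodicPts ⟨x, hx⟩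
  exact mk_mem_periodicPts hn (hper.map (g := Subtype.val) fun _ => rfl)

section Orbit

variable {α : Type*} [DecidableEq α] {f : α → α} {x : α}

variable (f x) in
noncomputable def orbitFinset : Finset α := (Finset.range (minimalPeriod f x)).image (f^[·] x)

theorem iterate_mem_orbitFinset (hx : x ∈ periodicPts f) (k : ℕ) : f^[k] x ∈ orbitFinset f x :=
  Finset.mem_image.2 ⟨k % minimalPeriod f x,
    Finset.mem_range.2 (Nat.mod_lt _ (minimalPeriod_pos_of_mem_periodicPts hx)),
    iterate_mod_minimalPeriod_eq⟩

theorem self_mem_orbitFinset (hx : x ∈ periodicPts f) : x ∈ orbitFinset f x :=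
  iterate_mem_orbitFinset hx 0

theorem orbitFinset_subset {s : Finset α} (hs : ∀ i ∈ s, f i ∈ s) (hx : x ∈ s) :
    orbitFinset f x ⊆ s := by
  intro y hy
  obtain ⟨k, -, rfl⟩ := Finset.mem_image.1 hy
  exact Set.MapsTo.iterate (f := f) (s := (s : Set α)) hs k hx

theorem card_orbitFinset : (orbitFinset f x).card = minimalPeriod f x := by
  rw [orbitFinset, Finset.card_image_of_injOn, Finset.card_range]
  simpa only [Finset.coe_range] using iterate_injOn_Iio_minimalPeriod

theorem mapsTo_sdiff_orbitFinset {s : Finset α} (hmaps : ∀ i ∈ s, f i ∈ s)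
    (hinj : Set.InjOn f s) (hx : x ∈ s) (hper : x ∈ periodicPts f) :
    ∀ i ∈ s \ orbitFinset f x, f i ∈ s \ orbitFinset f x := by
  intro i hi
  rw [Finset.mem_sdiff] at hi ⊢
  refine ⟨hmaps i hi.1, fun hfi => hi.2 ?_⟩
  obtain ⟨k, -, hk⟩ := Finset.mem_image.1 hfi
  have hL := minimalPeriod_pos_of_mem_periodicPts hper
  have hpre : f^[k + minimalPeriod f x - 1] x ∈ s :=
    (Set.MapsTo.iterate (f := f) (s := (s : Set α)) hmaps _) hx
  have : f (f^[k + minimalPeriod f x - 1] x) = f i := by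
    rw [← iterate_succ_apply' f, Nat.succ_eq_add_one, Nat.sub_add_cancel (by omega),
      iterate_add_minimalPeriod_eq, hk]
  rw [← hinj hpre hi.1 this]
  exact iterate_mem_orbitFinset hper _

end Orbit

section TorusSolutions

variable {α M : Type*} [CommGroup M] {e : ℕ} {f : α → α}

-- Solutions are required to be `1` off `s`, so that those for all subsets of `s` are subgroups
-- of one ambient group.
variable (M e f) in
def torusSolutions (s : Finset α) : Subgroup (α → M) where
  carrier := {t | (∀ i ∈ s, t i ^ e * t (f i) = 1) ∧ ∀ i ∉ s, t i = 1}
  one_mem' := by simp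
  mul_mem' := by
    rintro a b ⟨ha, ha'⟩ ⟨hb, hb'⟩
    refine ⟨fun i hi => ?_, fun i hi => ?_⟩
    · rw [Pi.mul_apply, Pi.mul_apply, mul_pow, mul_mul_mul_comm, ha i hi, hb i hi, one_mul]
    · rw [Pi.mul_apply, ha' i hi, hb' i hi, one_mul]
  inv_mem' := by
    rintro a ⟨ha, ha'⟩
    refine ⟨fun i hi => ?_, fun i hi => ?_⟩
    · rw [Pi.inv_apply, Pi.inv_apply, inv_pow, ← mul_inv, ha i hi, inv_one]
    · rw [Pi.inv_apply, ha' i hi, inv_one]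

theorem mem_torusSolutions {s : Finset α} {t : α → M} :
    t ∈ torusSolutions M e f s ↔ (∀ i ∈ s, t i ^ e * t (f i) = 1) ∧ ∀ i ∉ s, t i = 1 :=
  Iff.rfl

theorem torusSolutions_empty : torusSolutions M e f ∅ = ⊥ := by
  ext t
  simp [mem_torusSolutions, funext_iff]

theorem mem_torusSolutions_of_subset [DecidableEq α] {s p : Finset α} (hp : p ⊆ s)
    (hs : ∀ i ∈ s \ p, f i ∈ s \ p) {t : α → M} :
    t ∈ torusSolutions M e f p ↔ t ∈ torusSolutions M e f s ∧ ∀ i ∈ s \ p, t i = 1 := by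
  constructor
  · rintro ⟨h, h'⟩
    have h1 : ∀ i ∈ s \ p, t i = 1 := fun i hi => h' i (Finset.mem_sdiff.1 hi).2
    refine ⟨⟨fun i hi => ?_, fun i hi => h' i fun hip => hi (hp hip)⟩, h1⟩
    by_cases hip : i ∈ p
    · exact h i hip
    · have hi' : i ∈ s \ p := Finset.mem_sdiff.2 ⟨hi, hip⟩
      rw [h1 i hi', h1 _ (hs i hi'), one_pow, one_mul]
  · rintro ⟨⟨h, h'⟩, h1⟩
    refine ⟨fun i hi => h i (hp hi), fun i hi => ?_⟩
    by_cases his : i ∈ s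
    · exact h1 i (Finset.mem_sdiff.2 ⟨his, hi⟩)
    · exact h' i his

theorem torusSolutions_finite_and_card_le_mul [DecidableEq α] {s p : Finset α} (hp : p ⊆ s)
    (hs : ∀ i ∈ s \ p, f i ∈ s \ p) [Finite (torusSolutions M e f p)]
    [Finite (torusSolutions M e f (s \ p))] :
    Finite (torusSolutions M e f s) ∧
      Nat.card (torusSolutions M e f s) ≤
        Nat.card (torusSolutions M e f p) * Nat.card (torusSolutions M e f (s \ p)) := by
  refine Subgroup.finite_and_card_le_card_mul
    (fun t ht => ((mem_torusSolutions_of_subset hp hs).1 ht).1)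
    (fun t => ⟨(↑(s \ p) : Set α).mulIndicator t, fun i hi => ?_, fun i hi => ?_⟩)
    fun a b hab => ?_
  · rw [Set.mulIndicator_of_mem hi, Set.mulIndicator_of_mem (hs i hi)]
    exact t.2.1 i (Finset.mem_sdiff.1 hi).1
  · exact Set.mulIndicator_of_notMem hi _
  · refine (mem_torusSolutions_of_subset hp hs).2 ⟨mul_mem b.2 (inv_mem a.2), fun i hi => ?_⟩
    have := congrFun (congrArg Subtype.val hab) i
    simp only [Set.mulIndicator_of_mem (Finset.mem_coe.2 hi)] at this
    rw [Pi.mul_apply, Subgroup.coe_inv, Pi.inv_apply, this, mul_inv_cancel]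

end TorusSolutions

section UnitTorus

variable {α R : Type*} [CommRing R] [IsDomain R] {e : ℕ} {f : α → α}

theorem torusSolutions_singleton_finite_and_card_le (he : e ≠ 0) {x : α} (hx : f x ≠ x) :
    Finite (torusSolutions Rˣ e f {x}) ∧ Nat.card (torusSolutions Rˣ e f {x}) ≤ e := by
  have : NeZero e := ⟨he⟩
  refine finite_and_card_le_of_injOn_of_pow_eq_one (S := (torusSolutions Rˣ e f {x} : Set _))
    (fun t : α → Rˣ => t x) e (fun t ht => ?_) fun t ht t' ht' h => _root_.funext fun i => ?_
  · have ht := mem_torusSolutions.1 ht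
    simpa [ht.2 (f x) (by simpa using hx)] using ht.1 x (Finset.mem_singleton_self x)
  · by_cases hi : i = x
    · subst hi; exact h
    · rw [(mem_torusSolutions.1 ht).2 i (by simpa using hi),
        (mem_torusSolutions.1 ht').2 i (by simpa using hi)]

theorem torusSolutions_orbitFinset_finite_and_card_le_natAbs [DecidableEq α] {x : α}
    (hx : x ∈ periodicPts f) (hne : (-(e : ℤ)) ^ minimalPeriod f x ≠ 1) :
    Finite (torusSolutions Rˣ e f (orbitFinset f x)) ∧
      Nat.card (torusSolutions Rˣ e f (orbitFinset f x)) ≤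
        ((-(e : ℤ)) ^ minimalPeriod f x - 1).natAbs := by
  have hval : ∀ t ∈ torusSolutions Rˣ e f (orbitFinset f x), ∀ k : ℕ,
      t (f^[k] x) = t x ^ ((-(e : ℤ)) ^ k) := by
    intro t ht k
    induction k with
    | zero => simp
    | succ k ih =>
      rw [iterate_succ_apply', eq_inv_of_mul_eq_one_right (ht.1 _ (iterate_mem_orbitFinset hx k)),
        ih, ← zpow_natCast, ← zpow_mul, ← zpow_neg, pow_succ]
      ring_nf
  have : NeZero ((-(e : ℤ)) ^ minimalPeriod f x - 1).natAbs := ⟨by simpa [sub_eq_zero] using hne⟩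
  refine finite_and_card_le_of_injOn_of_pow_eq_one
    (S := (torusSolutions Rˣ e f (orbitFinset f x) : Set _)) (fun t : α → Rˣ => t x)
    ((-(e : ℤ)) ^ minimalPeriod f x - 1).natAbs
    (fun t ht => ?_) fun t ht t' ht' h => _root_.funext fun y => ?_
  · rw [pow_natAbs_eq_one, zpow_sub_one, ← hval t ht, iterate_minimalPeriod, mul_inv_cancel]
  · by_cases hy : y ∈ orbitFinset f x
    · obtain ⟨k, -, rfl⟩ := Finset.mem_image.1 hy
      rw [hval t ht, hval t' ht']
      exact congrArg (· ^ _) h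
    · rw [(mem_torusSolutions.1 ht).2 y hy, (mem_torusSolutions.1 ht').2 y hy]

theorem torusSolutions_orbitFinset_finite_and_card_le [DecidableEq α] (he : 2 ≤ e) {x : α}
    (hx : x ∈ periodicPts f) :
    Finite (torusSolutions Rˣ e f (orbitFinset f x)) ∧
      Nat.card (torusSolutions Rˣ e f (orbitFinset f x)) ≤ (e + 1) ^ (orbitFinset f x).card ∧
      (f x ≠ x →
        Nat.card (torusSolutions Rˣ e f (orbitFinset f x)) < (e + 1) ^ (orbitFinset f x).card) := by
  have hL := minimalPeriod_pos_of_mem_periodicPts hx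
  obtain ⟨hfin, hcard⟩ :=
    torusSolutions_orbitFinset_finite_and_card_le_natAbs (R := R) hx (neg_pow_ne_one he hL.ne')
  have hbound := natAbs_neg_pow_sub_one_le e (minimalPeriod f x)
  rw [card_orbitFinset]
  refine ⟨hfin, ?_, fun hfx => ?_⟩
  · have := pow_add_pow_le (Nat.zero_le e) zero_le_one hL.ne'
    rw [one_pow] at this
    omega
  · have : minimalPeriod f x ≠ 1 := fun h1 => hfx (minimalPeriod_eq_one_iff_isFixedPt.1 h1)
    have := pow_add_one_lt_add_one_pow (e := e) (by omega) (by omega : 2 ≤ minimalPeriod f x)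
    omega

-- Split off either a point of `s` outside `f '' s` or, when `f` permutes `s`, the cycle through
-- a point of `s` (a non-fixed one if there is any).
theorem exists_torusSolutions_piece [DecidableEq α] (he : 2 ≤ e) {s : Finset α}
    (hs : ∀ i ∈ s, f i ∈ s) (hne : s.Nonempty) :
    ∃ p ⊆ s, p.Nonempty ∧ (∀ i ∈ s \ p, f i ∈ s \ p) ∧ Finite (torusSolutions Rˣ e f p) ∧
      Nat.card (torusSolutions Rˣ e f p) ≤ (e + 1) ^ p.card ∧
      ((∃ i ∈ s, f i ≠ i) → Nat.card (torusSolutions Rˣ e f p) < (e + 1) ^ p.card) := by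
  by_cases hleaf : ∃ x ∈ s, ∀ i ∈ s, f i ≠ x
  · obtain ⟨x, hxs, hx⟩ := hleaf
    obtain ⟨hfin, hcard⟩ :=
      torusSolutions_singleton_finite_and_card_le (R := R) (e := e) (by omega) (hx x hxs)
    refine ⟨{x}, Finset.singleton_subset_iff.2 hxs, Finset.singleton_nonempty x,
      fun i hi => ?_, hfin, by rw [Finset.card_singleton, pow_one]; omega,
      fun _ => by rw [Finset.card_singleton, pow_one]; omega⟩
    rw [Finset.mem_sdiff, Finset.mem_singleton] at hi ⊢
    exact ⟨hs i hi.1, hx i hi.1⟩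
  push Not at hleaf
  have hinj : Set.InjOn f s :=
    Finset.injOn_of_surjOn_of_card_le f hs (fun x hx => by simpa using hleaf x hx) le_rfl
  obtain ⟨x, hxs, hxfix⟩ : ∃ x ∈ s, (∃ i ∈ s, f i ≠ i) → f x ≠ x := by
    by_cases h : ∃ i ∈ s, f i ≠ i
    · obtain ⟨i, hi, hfi⟩ := h
      exact ⟨i, hi, fun _ => hfi⟩
    · obtain ⟨x, hx⟩ := hne
      exact ⟨x, hx, fun h' => absurd h' h⟩
  have hper : x ∈ periodicPts f := mem_periodicPts_of_injOn s.finite_toSet hs hinj hxs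
  obtain ⟨hfin, hle, hlt⟩ := torusSolutions_orbitFinset_finite_and_card_le (R := R) he hper
  exact ⟨orbitFinset f x, orbitFinset_subset hs hxs, ⟨x, self_mem_orbitFinset hper⟩,
    mapsTo_sdiff_orbitFinset hs hinj hxs hper, hfin, hle, fun h => hlt (hxfix h)⟩

theorem torusSolutions_finite_and_card_le [DecidableEq α] (he : 2 ≤ e) (s : Finset α)
    (hs : ∀ i ∈ s, f i ∈ s) :
    Finite (torusSolutions Rˣ e f s) ∧ Nat.card (torusSolutions Rˣ e f s) ≤ (e + 1) ^ s.card ∧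
      ((∃ i ∈ s, f i ≠ i) → Nat.card (torusSolutions Rˣ e f s) < (e + 1) ^ s.card) := by
  induction s using Finset.strongInduction with
  | H s ih =>
    rcases s.eq_empty_or_nonempty with rfl | hne
    · rw [torusSolutions_empty]
      exact ⟨inferInstance, by simp, by simp⟩
    obtain ⟨p, hps, hp, hs', hfin, hle, hlt⟩ := exists_torusSolutions_piece (R := R) he hs hne
    obtain ⟨hfin', hle', -⟩ := ih (s \ p) (Finset.sdiff_ssubset hps hp) hs'
    obtain ⟨hfins, hcard⟩ := torusSolutions_finite_and_card_le_mul (M := Rˣ) (e := e) hps hs'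
    have hsplit : (e + 1) ^ s.card = (e + 1) ^ p.card * (e + 1) ^ (s \ p).card := by
      rw [← pow_add, Nat.add_comm p.card, Finset.card_sdiff_add_card_eq_card hps]
    refine ⟨hfins, hcard.trans (hsplit ▸ Nat.mul_le_mul hle hle'), fun h => ?_⟩
    exact hcard.trans_lt (hsplit ▸ Nat.mul_lt_mul_of_lt_of_le (hlt h) hle' (by positivity))

end UnitTorus

section Matrices

variable {n R : Type*} [Fintype n] [DecidableEq n]

noncomputable def diagonalGL [CommRing R] : (n → Rˣ) →* GL n R :=
  (Units.map (Matrix.diagonalRingHom n R).toMonoidHom).comp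
    MulEquiv.piUnits.symm.toMonoidHom

@[simp]
theorem coe_diagonalGL [CommRing R] (t : n → Rˣ) :
    (diagonalGL t : Matrix n n R) = Matrix.diagonal fun i => (t i : R) :=
  rfl

theorem diagonalGL_injective [CommRing R] : Injective (diagonalGL : (n → Rˣ) →* GL n R) := by
  intro t u h
  funext i
  have := congrArg (fun A : GL n R => (A : Matrix n n R) i i) h
  simpa [Units.ext_iff] using this

theorem diagonal_mul_permMatrix_apply [CommRing R] (t : n → R) (σ : Equiv.Perm n) (i j : n) :
    (Matrix.diagonal t * σ.permMatrix R) i j = if σ i = j then t i else 0 := by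
  simp [Matrix.diagonal_mul, PEquiv.toMatrix_apply]

theorem diagonal_mul_permMatrix_inj [CommRing R] {a b : n → R} {σ τ : Equiv.Perm n}
    (ha : ∀ i, a i ≠ 0)
    (h : Matrix.diagonal a * σ.permMatrix R = Matrix.diagonal b * τ.permMatrix R) :
    σ = τ ∧ a = b := by
  have key : ∀ i, τ i = σ i ∧ a i = b i := by
    intro i
    have := congrFun (congrFun h i) (σ i)
    rw [diagonal_mul_permMatrix_apply, diagonal_mul_permMatrix_apply, if_pos rfl] at this
    split_ifs at this with hτ
    · exact ⟨hτ, this⟩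
    · exact absurd this (ha i)
  exact ⟨Equiv.ext fun i => (key i).1.symm, funext fun i => (key i).2⟩

theorem exists_diagonalGL_mul_eq [Field R] {A B : GL n R} {M : Matrix n n R} {a b : n → R}
    (ha : ∀ i, a i ≠ 0) (hb : ∀ i, b i ≠ 0) (hA : (A : Matrix n n R) = Matrix.diagonal a * M)
    (hB : (B : Matrix n n R) = Matrix.diagonal b * M) :
    ∃ t : n → Rˣ, B = diagonalGL t * A := by
  refine ⟨fun i => Units.mk0 (b i / a i) (div_ne_zero (hb i) (ha i)), Units.ext ?_⟩
  rw [Units.val_mul, coe_diagonalGL, hA, hB, ← mul_assoc, Matrix.diagonal_mul_diagonal]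
  congr 2
  funext i
  simp [div_mul_cancel₀ _ (ha i)]

end Matrices

theorem IsSemiPermutation.exists_eq_diagonal_mul_permMatrix {r : ℕ}
    {A : Matrix (Fin r) (Fin r) ℂ} (hA : IsSemiPermutation A) :
    ∃ (σ : Equiv.Perm (Fin r)) (t : Fin r → ℂ), (∀ i, t i ≠ 0) ∧
      A = Matrix.diagonal t * σ.permMatrix ℂ := by
  obtain ⟨σ, t, ht, hA⟩ := hA
  exact ⟨σ, t, ht, Matrix.ext fun i j => by rw [hA, diagonal_mul_permMatrix_apply]⟩

theorem Finsupp.exists_eq_single_of_degree_eq_of_dvd {σ : Type*} {a : σ →₀ ℕ} {d : ℕ}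
    (hd : d ≠ 0) (hdeg : a.degree = d) (hdvd : ∀ i, d ∣ a i) : ∃ i, a = single i d := by
  obtain ⟨i, hi⟩ : ∃ i, a i ≠ 0 := by
    by_contra! h
    apply hd
    rw [← hdeg, show a = 0 from Finsupp.ext h, map_zero]
  have hai : a i = d :=
    le_antisymm (hdeg ▸ le_degree i a) (Nat.le_of_dvd (Nat.pos_of_ne_zero hi) (hdvd i))
  have hle : single i d ≤ a := single_le_iff.2 hai.ge
  have hrest : (a - single i d).degree = 0 := by
    have := congrArg degree (add_tsub_cancel_of_le hle)
    rw [map_add, degree_single, hdeg] at this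
    omega
  rw [degree_eq_zero_iff, tsub_eq_zero_iff_le] at hrest
  exact ⟨i, le_antisymm hrest hle⟩

theorem MvPolynomial.IsHomogeneous.eval_piSingle_one {σ R : Type*} [CommSemiring R] [Fintype σ]
    [DecidableEq σ] {G : MvPolynomial σ R} {m : ℕ} (hG : G.IsHomogeneous m) (i : σ) :
    eval (Pi.single i 1) G = coeff (Finsupp.single i m) G := by
  rw [eval_eq', Finset.sum_eq_single (Finsupp.single i m)]
  · rw [Finset.prod_eq_one, mul_one]
    intro k _
    by_cases hk : k = i
    · subst hk; simp
    · simp [hk]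
  · intro b hb hne
    obtain ⟨k, hki, hk⟩ : ∃ k ≠ i, b k ≠ 0 := by
      by_contra! h
      have hdeg : b.degree = m := by
        by_contra hdeg
        exact mem_support_iff.1 hb (hG.coeff_eq_zero hdeg)
      apply hne
      ext k
      by_cases hk : k = i
      · subst hk
        rw [Finsupp.single_eq_same, ← hdeg, Finsupp.degree_eq_sum,
          Finset.sum_eq_single k (fun l _ hl => h l hl) (by simp)]
      · rw [h k hk, Finsupp.single_eq_of_ne hk]
    rw [Finset.prod_eq_zero (Finset.mem_univ k), mul_zero]
    rw [Pi.single_eq_of_ne hki, zero_pow hk]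
  · intro h
    rw [notMem_support_iff.1 h, zero_mul]

section Forms

variable {r : ℕ}

noncomputable def diagonalAut (F : MvPolynomial (Fin r) ℂ) : Subgroup (Fin r → ℂˣ) :=
  (formAut F).comap diagonalGL

theorem matAct_X (A : Matrix (Fin r) (Fin r) ℂ) (i : Fin r) :
    matAct A (X i) = ∑ j, C (A i j) * X j :=
  bind₁_X_right _ _

theorem matAct_diagonal_mul_permMatrix_X (t : Fin r → ℂ) (σ : Equiv.Perm (Fin r)) (i : Fin r) :
    matAct (Matrix.diagonal t * σ.permMatrix ℂ) (X i) = C (t i) * X (σ i) := by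
  simp [matAct_X, apply_ite C, ite_mul]

theorem matAct_diagonal (t : Fin r → ℂ) (F : MvPolynomial (Fin r) ℂ) :
    matAct (Matrix.diagonal t) F = bind₁ (fun i => C (t i) * X i) F := by
  unfold matAct
  congr 2
  funext i
  simp [Matrix.diagonal_apply, apply_ite C, ite_mul]

theorem coeff_matAct_diagonal (t : Fin r → ℂ) (F : MvPolynomial (Fin r) ℂ) (a : Fin r →₀ ℕ) :
    coeff a (matAct (Matrix.diagonal t) F) = (a.prod fun i k => t i ^ k) * coeff a F := by
  rw [matAct_diagonal]
  induction F using MvPolynomial.induction_on' with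
  | monomial b c =>
    have hmono : C c * ∏ i ∈ b.support, (C (t i) * X i) ^ b i =
        monomial b (c * b.prod fun i k => t i ^ k) := by
      rw [monomial_eq, C_mul, Finsupp.prod, Finsupp.prod, map_prod]
      simp only [mul_pow, Finset.prod_mul_distrib, map_pow]
      ring
    rw [bind₁_monomial, hmono, coeff_monomial, coeff_monomial]
    split_ifs with h
    · subst h; ring
    · simp
  | add p q hp hq => rw [map_add, coeff_add, coeff_add, hp, hq, mul_add]

theorem prod_pow_eq_one_of_matAct_diagonal_eq {t : Fin r → ℂ} {F : MvPolynomial (Fin r) ℂ}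
    (h : matAct (Matrix.diagonal t) F = F) {a : Fin r →₀ ℕ} (ha : coeff a F ≠ 0) :
    (a.prod fun i k => t i ^ k) = 1 := by
  have := congrArg (coeff a) h
  rw [coeff_matAct_diagonal] at this
  exact mul_right_cancel₀ ha (this.trans (one_mul _).symm)

theorem IsSmoothForm.exists_coeff_ne_zero {n : ℕ} {F : MvPolynomial (Fin r) ℂ}
    (hsm : IsSmoothForm F) (hhom : F.IsHomogeneous (n + 1)) (i : Fin r) :
    ∃ j, coeff (Finsupp.single i n + Finsupp.single j 1) F ≠ 0 := by
  by_contra! h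
  have hzero := hsm (Pi.single i 1) fun j => by
    have := (hhom.pderiv (i := j)).eval_piSingle_one i
    rw [Nat.add_sub_cancel] at this
    rw [this, coeff_pderiv, h j, zero_mul]
  simpa using congrFun hzero i

theorem exists_diagonalAut_le_torusSolutions {n : ℕ} {F : MvPolynomial (Fin r) ℂ}
    (hsm : IsSmoothForm F) (hhom : F.IsHomogeneous (n + 1)) :
    ∃ j : Fin r → Fin r, (∀ i, coeff (Finsupp.single i n + Finsupp.single (j i) 1) F ≠ 0) ∧
      diagonalAut F ≤ torusSolutions ℂˣ n j Finset.univ := by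
  choose j hj using hsm.exists_coeff_ne_zero hhom
  refine ⟨j, hj, fun t ht => ⟨fun i _ => Units.ext ?_, fun i hi => absurd (Finset.mem_univ i) hi⟩⟩
  have := prod_pow_eq_one_of_matAct_diagonal_eq ht (hj i)
  rw [Finsupp.prod_add_index' (by simp) (by simp [pow_add]), Finsupp.prod_single_index (by simp),
    Finsupp.prod_single_index (by simp), pow_one] at this
  simpa using this

theorem matAct_inv_matAct (A : GL (Fin r) ℂ) (p : MvPolynomial (Fin r) ℂ) :
    matAct ↑A⁻¹ (matAct ↑A p) = p := by
  rw [← matAct_mul, ← Units.val_mul, mul_inv_cancel, Units.val_one, matAct_one]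

theorem matAct_injective (A : GL (Fin r) ℂ) : Injective (matAct (A : Matrix (Fin r) (Fin r) ℂ)) :=
  fun p q h => by rw [← matAct_inv_matAct A p, h, matAct_inv_matAct]

theorem formAut_matAct (A : GL (Fin r) ℂ) (F : MvPolynomial (Fin r) ℂ) :
    formAut (matAct (A : Matrix (Fin r) (Fin r) ℂ) F) =
      (formAut F).comap (MulAut.conj A).toMonoidHom := by
  ext B
  change matAct _ (matAct _ F) = matAct _ F ↔
    matAct ((A * B * A⁻¹ : GL (Fin r) ℂ) : Matrix _ _ ℂ) F = F
  rw [Units.val_mul, Units.val_mul, matAct_mul, matAct_mul, ← (matAct_injective A⁻¹).eq_iff,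
    matAct_inv_matAct]

theorem FormIso.card_formAut_eq {F G : MvPolynomial (Fin r) ℂ} (h : FormIso F G) :
    Nat.card (formAut G) = Nat.card (formAut F) := by
  obtain ⟨A, rfl⟩ := h
  rw [formAut_matAct, Subgroup.comap_equiv_eq_map_symm',
    Subgroup.card_map_of_injective (MulEquiv.injective _)]

theorem matAct_diagonal_mul_permMatrix_fermatForm {d : ℕ} {t : Fin r → ℂ} (ht : ∀ i, t i ^ d = 1)
    (σ : Equiv.Perm (Fin r)) :
    matAct (Matrix.diagonal t * σ.permMatrix ℂ) (fermatForm r d) = fermatForm r d := by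
  calc matAct (Matrix.diagonal t * σ.permMatrix ℂ) (fermatForm r d)
      = ∑ i, matAct (Matrix.diagonal t * σ.permMatrix ℂ) (X i) ^ d := by
        simp only [matAct, fermatForm, map_sum, map_pow]
    _ = ∑ i, X (σ i) ^ d := by
        simp only [matAct_diagonal_mul_permMatrix_X, mul_pow, ← map_pow, ht, map_one, one_mul]
    _ = fermatForm r d := Equiv.sum_comp σ fun i => (X i : MvPolynomial (Fin r) ℂ) ^ d

theorem le_card_formAut_fermatForm {d : ℕ} (hd : d ≠ 0) [Finite (formAut (fermatForm r d))] :
    d ^ r * r.factorial ≤ Nat.card (formAut (fermatForm r d)) := by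
  have : NeZero d := ⟨hd⟩
  let ι : Equiv.Perm (Fin r) × (Fin r → rootsOfUnity d ℂ) → formAut (fermatForm r d) := fun p =>
    ⟨diagonalGL (fun i => (p.2 i : ℂˣ)) * Matrix.permMatrixHom.toHomUnits p.1, by
      change matAct (Matrix.diagonal _ * _) _ = _
      exact matAct_diagonal_mul_permMatrix_fermatForm
        (fun i => by simpa [← Units.val_pow_eq_pow_val] using congrArg Units.val (p.2 i).2) _⟩
  have hι : Injective ι := by
    rintro ⟨σ, ζ⟩ ⟨τ, ξ⟩ h
    have h' : (Matrix.diagonal fun i => ((ζ i : ℂˣ) : ℂ)) * σ⁻¹.permMatrix ℂ =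
        (Matrix.diagonal fun i => ((ξ i : ℂˣ) : ℂ)) * τ⁻¹.permMatrix ℂ := by
      have := congrArg
        (fun A : formAut (fermatForm r d) => ((A : GL (Fin r) ℂ) : Matrix (Fin r) (Fin r) ℂ)) h
      simpa [ι] using this
    obtain ⟨hστ, hζξ⟩ := diagonal_mul_permMatrix_inj (fun i => (ζ i : ℂˣ).ne_zero) h'
    refine Prod.ext (inv_injective hστ) (funext fun i => ?_)
    exact Subtype.ext (Units.ext (congrFun hζξ i))
  have := Nat.card_le_card_of_injective ι hι
  rwa [Nat.card_prod, Nat.card_perm, Nat.card_fun, Complex.card_rootsOfUnity, Nat.card_fin,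
    mul_comm] at this

theorem le_card_formAut_of_formIso_fermatForm {d : ℕ} (hd : d ≠ 0) {F : MvPolynomial (Fin r) ℂ}
    [Finite (formAut F)] (h : FormIso F (fermatForm r d)) :
    d ^ r * r.factorial ≤ Nat.card (formAut F) := by
  have : Finite (formAut (fermatForm r d)) :=
    Nat.finite_of_card_ne_zero (h.card_formAut_eq ▸ Nat.card_pos.ne')
  exact h.card_formAut_eq ▸ le_card_formAut_fermatForm hd

theorem eq_sum_C_mul_X_pow_of_forall_mem_diagonalAut {d : ℕ} (hd : d ≠ 0)
    {F : MvPolynomial (Fin r) ℂ} (hhom : F.IsHomogeneous d)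
    (hfix : ∀ t : Fin r → ℂˣ, (∀ i, t i ^ d = 1) → t ∈ diagonalAut F) :
    F = ∑ i, C (coeff (Finsupp.single i d) F) * X i ^ d := by
  have hζ := Complex.isPrimitiveRoot_exp d hd
  set ζ : ℂˣ := (hζ.isUnit hd).unit
  have hζ' : IsPrimitiveRoot ζ d := IsPrimitiveRoot.coe_units_iff.1 (by simpa [ζ] using hζ)
  have hshape : ∀ a, coeff a F ≠ 0 → ∃ i, a = Finsupp.single i d := by
    intro a ha
    refine Finsupp.exists_eq_single_of_degree_eq_of_dvd hd
      (by_contra fun h => ha (hhom.coeff_eq_zero h)) fun i => ?_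
    have hfixi := hfix (Pi.mulSingle i ζ) fun k => by
      by_cases hk : k = i
      · rw [hk, Pi.mulSingle_eq_same, hζ'.pow_eq_one]
      · rw [Pi.mulSingle_eq_of_ne hk, one_pow]
    have := prod_pow_eq_one_of_matAct_diagonal_eq hfixi ha
    rw [Finsupp.prod_pow, Finset.prod_eq_single i (fun k _ hk => by simp [hk]) (by simp)] at this
    exact hζ.dvd_of_pow_eq_one _ (by simpa [ζ] using this)
  ext a
  simp only [coeff_sum, coeff_C_mul, coeff_X_pow]
  by_cases ha : coeff a F = 0
  · rw [ha]
    refine (Finset.sum_eq_zero fun i _ => ?_).symm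
    split_ifs with h
    · rw [h, ha, mul_one]
    · rw [mul_zero]
  · obtain ⟨k, rfl⟩ := hshape a ha
    rw [Finset.sum_eq_single k (fun i _ hik => by simp [Finsupp.single_left_inj hd, hik])
      (by simp)]
    simp

theorem formIso_fermatForm_of_eq_sum {d : ℕ} (hd : d ≠ 0) {c : Fin r → ℂ} (hc : ∀ i, c i ≠ 0) :
    FormIso (∑ i, C (c i) * X i ^ d) (fermatForm r d) := by
  choose u hu using fun i => IsAlgClosed.exists_pow_nat_eq (c i)⁻¹ (Nat.pos_of_ne_zero hd)
  have hu0 : ∀ i, u i ≠ 0 := fun i h => inv_ne_zero (hc i) (by rw [← hu i, h, zero_pow hd])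
  refine ⟨diagonalGL fun i => Units.mk0 (u i) (hu0 i), ?_⟩
  rw [coe_diagonalGL, matAct_diagonal]
  simp only [Units.val_mk0, map_sum, map_mul, map_pow, bind₁_C_right, bind₁_X_right, fermatForm]
  refine Finset.sum_congr rfl fun i _ => ?_
  rw [mul_pow, ← map_pow, hu i, ← mul_assoc, ← C_mul, mul_inv_cancel₀ (hc i), C_1, one_mul]

theorem finite_and_card_formAut_le {F : MvPolynomial (Fin r) ℂ}
    (hmono : ∀ A ∈ formAut F, IsSemiPermutation (A : Matrix (Fin r) (Fin r) ℂ))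
    [Finite (diagonalAut F)] :
    Finite (formAut F) ∧
      Nat.card (formAut F) ≤ Nat.card (diagonalAut F) * r.factorial := by
  choose σ t ht hA using fun A : formAut F => (hmono A A.2).exists_eq_diagonal_mul_permMatrix
  have : Finite ((diagonalAut F).map diagonalGL) :=
    .of_equiv _ ((diagonalAut F).equivMapOfInjective _ diagonalGL_injective).toEquiv
  have hle : (diagonalAut F).map diagonalGL ≤ formAut F := Subgroup.map_comap_le _ _
  have := Subgroup.finite_and_card_le_card_mul hle σ fun A B hAB => ?_
  · rwa [Subgroup.card_map_of_injective diagonalGL_injective, Nat.card_perm, Nat.card_fin] at this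
  obtain ⟨u, hu⟩ := exists_diagonalGL_mul_eq (ht A) (ht B) (hA A) (by rw [hA B, hAB])
  have hBA : ((B * A⁻¹ : formAut F) : GL (Fin r) ℂ) = diagonalGL u := by
    rw [Subgroup.coe_mul, Subgroup.coe_inv, hu, mul_inv_cancel_right]
  exact ⟨u, show diagonalGL u ∈ formAut F from hBA ▸ (B * A⁻¹).2, hBA.symm⟩

theorem finite_and_card_diagonalAut_le {n : ℕ} (hn : 2 ≤ n)
    {F : MvPolynomial (Fin r) ℂ} (hsm : IsSmoothForm F) (hhom : F.IsHomogeneous (n + 1)) :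
    Finite (diagonalAut F) ∧
      Nat.card (diagonalAut F) ≤ (n + 1) ^ r := by
  obtain ⟨j, -, hle⟩ := exists_diagonalAut_le_torusSolutions hsm hhom
  obtain ⟨hfin, hcard, -⟩ :=
    torusSolutions_finite_and_card_le (R := ℂ) (f := j) hn Finset.univ (by simp)
  refine ⟨Finite.of_injective _ (Subgroup.inclusion_injective hle),
    (Subgroup.card_le_of_le hle).trans ?_⟩
  simpa using hcard

theorem formIso_fermatForm_of_le_card_diagonalAut {n : ℕ} (hn : 2 ≤ n)
    {F : MvPolynomial (Fin r) ℂ} (hsm : IsSmoothForm F) (hhom : F.IsHomogeneous (n + 1))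
    (hcard : (n + 1) ^ r ≤ Nat.card (diagonalAut F)) :
    FormIso F (fermatForm r (n + 1)) := by
  obtain ⟨j, hcoeff, hle⟩ := exists_diagonalAut_le_torusSolutions hsm hhom
  obtain ⟨hfin, hK, hKlt⟩ :=
    torusSolutions_finite_and_card_le (R := ℂ) (f := j) hn Finset.univ (by simp)
  have hDK := Subgroup.card_le_of_le hle
  simp only [Finset.card_univ, Fintype.card_fin, Finset.mem_univ, true_and] at hK hKlt
  have hj : ∀ i, j i = i := by
    by_contra! hne
    have := hKlt hne
    omega
  have hDeq := Subgroup.eq_of_le_of_card_ge hle (by omega)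
  have hfix : ∀ t : Fin r → ℂˣ, (∀ i, t i ^ (n + 1) = 1) → t ∈ diagonalAut F :=
    fun t ht => hDeq ▸
      ⟨fun i _ => by rw [hj, ← pow_succ, ht], fun i hi => absurd (Finset.mem_univ i) hi⟩
  rw [eq_sum_C_mul_X_pow_of_forall_mem_diagonalAut (by omega) hhom hfix]
  exact formIso_fermatForm_of_eq_sum (by omega) fun i => by
    simpa [hj, ← Finsupp.single_add] using hcoeff i

end Forms

theorem semi_permutation_aut_bound_general
    (r d : ℕ) (hd : 3 ≤ d)
    (F : MvPolynomial (Fin r) ℂ) (hhom : F.IsHomogeneous d) (hsm : IsSmoothForm F)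
    (hmono : ∀ A ∈ formAut F, IsSemiPermutation (A : Matrix (Fin r) (Fin r) ℂ)) :
    (formAut F : Set (GL (Fin r) ℂ)).Finite ∧
    Nat.card (formAut F) ≤ d ^ r * r.factorial ∧
    (Nat.card (formAut F) = d ^ r * r.factorial ↔ FormIso F (fermatForm r d)) := by
  obtain ⟨n, rfl⟩ : ∃ n, d = n + 1 := ⟨d - 1, by omega⟩
  obtain ⟨hDfin, hDle⟩ := finite_and_card_diagonalAut_le (by omega) hsm hhom
  obtain ⟨hfin, hcard⟩ := finite_and_card_formAut_le hmono
  have hle : Nat.card (formAut F) ≤ (n + 1) ^ r * r.factorial :=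
    hcard.trans (Nat.mul_le_mul_right _ hDle)
  refine ⟨Set.toFinite _, hle, fun heq => ?_,
    fun hiso => le_antisymm hle (le_card_formAut_of_formIso_fermatForm (by omega) hiso)⟩
  exact formIso_fermatForm_of_le_card_diagonalAut (by omega) hsm hhom
    (Nat.le_of_mul_le_mul_right (heq ▸ hcard) r.factorial_pos)

/-- if `Aut(F)` consists of semi-permutations then `|Aut(F)| ≤ d^r·r!`,
with equality exactly for the Fermat form. -/
theorem semi_permutation_aut_bound
    (r d : ℕ) (hr : 2 ≤ r) (hd : 3 ≤ d)
    (F : MvPolynomial (Fin r) ℂ) (hhom : F.IsHomogeneous d) (hsm : IsSmoothForm F)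
    (hmono : ∀ A ∈ formAut F, IsSemiPermutation (A : Matrix (Fin r) (Fin r) ℂ)) :
    (formAut F : Set (GL (Fin r) ℂ)).Finite ∧
    Nat.card (formAut F) ≤ d ^ r * r.factorial ∧
    (Nat.card (formAut F) = d ^ r * r.factorial ↔ FormIso F (fermatForm r d)) :=
  semi_permutation_aut_bound_general r d hd F hhom hsm hmono
end

section
/- Let l be a subdegree sequence containing an entry r_0 > 1 with multiplicity k_0 ≥ 1, and let d ≥ 3 be an integer. Let l + (r_0) denote the subdegree sequence obtained from l by inserting one additional entry equal to r_0. Then R(l,d) > R(l+(r_0), d) holds whenever one of the following is true: (1) r_0 = 2 and k_0 ≥ 5; (2) r_0 = 4 and k_0 ≥ 2; (3) r_0 = 3 or r_0 ≥ 5. In particular, if l consists of k_0 copies of a single value r_0 with r_0 ∉ {2,3,4,5,6,8}, then R(l,d) < 1. -/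
/-- Collins' function `JC`: the maximal order of a finite primitive subgroup of
`PGL(r,ℂ)`. -/
def JC : ℕ → ℕ
  | 1 => 1
  | 2 => 60
  | 3 => 360
  | 4 => 25920
  | 5 => 25920
  | 6 => 6531840
  | 7 => 1451520
  | 8 => 348364800
  | 9 => 4199040
  | 12 => 448345497600
  | r => (r + 1).factorial

lemma JC_pos (r : ℕ) : 0 < JC r := by
  unfold JC; split <;> simp [Nat.factorial_pos]

lemma JC_ge13 (r : ℕ) (h : 13 ≤ r) : JC r = (r + 1).factorial := by
  obtain ⟨n, rfl⟩ : ∃ n, r = n + 13 := ⟨r - 13, by omega⟩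
  rfl

/-- Product (m+1)(m+2)...(m+r). -/
def PR (m r : ℕ) : ℕ := ∏ j ∈ Finset.range r, (m + j + 1)

lemma PR_pos (m r : ℕ) : 0 < PR m r :=
  Finset.prod_pos fun j _ => by omega

lemma PR_succ (m r : ℕ) : PR m (r + 1) = PR m r * (m + r + 1) :=
  Finset.prod_range_succ _ _

lemma PR_succ_left (m r : ℕ) : PR m (r + 1) = (m + 1) * PR (m + 1) r := by
  rw [PR, Finset.prod_range_succ', PR, mul_comm]
  congr 1
  exact Finset.prod_congr rfl fun j _ => by ring

lemma PR_mono {m n : ℕ} (h : m ≤ n) (r : ℕ) : PR m r ≤ PR n r :=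
  Finset.prod_le_prod (fun j _ => by omega) (fun j _ => by omega)

lemma fact_PR (s r : ℕ) : (s + r).factorial = s.factorial * PR s r := by
  induction r with
  | zero => simp [PR]
  | succ t ih =>
    rw [PR_succ, ← Nat.add_assoc, Nat.factorial_succ, ih]; ring

lemma fact_eq_PR_one (r : ℕ) : (r + 1).factorial = PR 1 r := by
  have := fact_PR 1 r
  rw [Nat.add_comm 1 r] at this
  simpa [Nat.factorial] using this

/-- For `r` in the "generic" branch, `JC r = (r+1)!`. -/
lemma JC_generic (r : ℕ) (h : r = 10 ∨ r = 11 ∨ 13 ≤ r) : JC r = (r + 1).factorial := by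
  rcases h with rfl | rfl | h
  · rfl
  · rfl
  · exact JC_ge13 r h

lemma JC_lt_main (r k : ℕ) (hk : 1 ≤ k)
    (h : (r = 2 ∧ 5 ≤ k) ∨ (r = 4 ∧ 2 ≤ k) ∨ r = 3 ∨ 5 ≤ r) :
    JC r < 3 ^ (r - 1) * (r * PR (r * k) (r - 1)) := by
  rcases h with ⟨rfl, hk5⟩ | ⟨rfl, hk2⟩ | rfl | hr5
  · -- r = 2 : JC 2 = 60 < 3 * (2 * (2k+1)) with k ≥ 5
    have : PR (2 * k) 1 = 2 * k + 1 := by simp [PR]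
    rw [this]
    show (60 : ℕ) < 3 ^ 1 * (2 * (2 * k + 1))
    omega
  · -- r = 4 : 25920 < 27 * (4 * PR (4k) 3), PR 8 3 = 990
    have h1 : PR 8 3 ≤ PR (4 * k) 3 := PR_mono (by omega) 3
    have h2 : PR 8 3 = 990 := by norm_num [PR, Finset.prod_range_succ]
    calc JC 4 = 25920 := rfl
      _ < 3 ^ 3 * (4 * PR 8 3) := by rw [h2]; norm_num
      _ ≤ 3 ^ 3 * (4 * PR (4 * k) 3) := by
          exact Nat.mul_le_mul_left _ (Nat.mul_le_mul_left _ h1)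
  · -- r = 3 : 360 < 9 * (3 * PR (3k) 2), PR 3 2 = 20
    have h1 : PR 3 2 ≤ PR (3 * k) 2 := PR_mono (by omega) 2
    have h2 : PR 3 2 = 20 := by norm_num [PR, Finset.prod_range_succ]
    calc JC 3 = 360 := rfl
      _ < 3 ^ 2 * (3 * PR 3 2) := by rw [h2]; norm_num
      _ ≤ 3 ^ 2 * (3 * PR (3 * k) 2) := by
          exact Nat.mul_le_mul_left _ (Nat.mul_le_mul_left _ h1)
  · -- r ≥ 5
    have hmono : PR r (r - 1) ≤ PR (r * k) (r - 1) := PR_mono (by nlinarith) _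
    have step : JC r ≤ r * PR r (r - 1) → JC r < 3 ^ (r - 1) * (r * PR (r * k) (r - 1)) := by
      intro hle
      have h1 : JC r ≤ r * PR (r * k) (r - 1) :=
        hle.trans (Nat.mul_le_mul_left _ hmono)
      have h3 : 1 < 3 ^ (r - 1) := Nat.one_lt_pow (by omega) (by norm_num)
      calc JC r ≤ r * PR (r * k) (r - 1) := h1
        _ = 1 * (r * PR (r * k) (r - 1)) := (one_mul _).symm
        _ < 3 ^ (r - 1) * (r * PR (r * k) (r - 1)) :=
            (Nat.mul_lt_mul_right (Nat.mul_pos (by omega) (PR_pos _ _))).mpr h3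
    -- now case on the value of r
    by_cases hgen : r = 10 ∨ r = 11 ∨ 13 ≤ r
    · refine step ?_
      rw [JC_generic r hgen, fact_eq_PR_one]
      obtain ⟨t, rfl⟩ : ∃ t, r = t + 1 := ⟨r - 1, by omega⟩
      calc PR 1 (t + 1) ≤ PR t (t + 1) := PR_mono (by omega) _
        _ = (t + 1) * PR (t + 1) t := PR_succ_left t t
        _ = (t + 1) * PR (t + 1) (t + 1 - 1) := by simp
    · -- r ∈ {5,6,7,8,9,12}
      have : r = 5 ∨ r = 6 ∨ r = 7 ∨ r = 8 ∨ r = 9 ∨ r = 12 := by omega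
      rcases this with rfl | rfl | rfl | rfl | rfl | rfl <;>
        refine lt_of_lt_of_le ?_
          (Nat.mul_le_mul_left _ (Nat.mul_le_mul_left _ hmono)) <;>
        norm_num [JC, PR, Finset.prod_range_succ]

/-- A subdegree sequence, recorded as the multiset of its entries: it must be nonempty
and all entries must be positive. -/
def IsSubdegreeSeq (l : Multiset ℕ) : Prop := l ≠ 0 ∧ ∀ x ∈ l, 0 < x

/-- The Fermat-test ratio `R(l,d)`. -/
def FTR (l : Multiset ℕ) (d : ℕ) : ℚ :=
  ((d ^ (Multiset.card l) * (l.map JC).prod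
      * ∏ x ∈ l.toFinset, (l.count x).factorial : ℕ) : ℚ)
    / ((d ^ l.sum * l.sum.factorial : ℕ) : ℚ)


lemma core (d r k s : ℕ) (hd : 3 ≤ d) (hk : 1 ≤ k) (hr : 2 ≤ r) (hs : r * k ≤ s)
    (hmain : JC r < 3 ^ (r - 1) * (r * PR (r * k) (r - 1))) :
    d * (JC r * ((k + 1) * s.factorial)) < d ^ r * (r + s).factorial := by
  obtain ⟨t, rfl⟩ : ∃ t, r = t + 1 := ⟨r - 1, by omega⟩
  simp only [Nat.add_sub_cancel] at hmain
  have hdpos : 0 < d := by omega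
  have hfact : (t + 1 + s).factorial
      = s.factorial * (PR s t * (s + t + 1)) := by
    rw [show t + 1 + s = s + (t + 1) by ring, fact_PR, PR_succ]
  have h1 : JC (t + 1) * ((k + 1) * s.factorial)
      < (3 ^ t * ((t + 1) * PR ((t + 1) * k) t)) * ((k + 1) * s.factorial) :=
    Nat.mul_lt_mul_of_lt_of_le hmain le_rfl (by positivity)
  have h2 : (3 ^ t * ((t + 1) * PR ((t + 1) * k) t)) * ((k + 1) * s.factorial)
      ≤ (d ^ t * PR s t) * (((s + t + 1)) * s.factorial) := by
    have e1 : (3:ℕ) ^ t ≤ d ^ t := Nat.pow_le_pow_left hd t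
    have e2 : PR ((t + 1) * k) t ≤ PR s t := PR_mono hs t
    have e3 : (t + 1) * (k + 1) ≤ s + t + 1 := by nlinarith
    calc (3 ^ t * ((t + 1) * PR ((t + 1) * k) t)) * ((k + 1) * s.factorial)
        = (3 ^ t * PR ((t + 1) * k) t) * (((t + 1) * (k + 1)) * s.factorial) := by ring
      _ ≤ (d ^ t * PR s t) * (((s + t + 1)) * s.factorial) := by
          exact Nat.mul_le_mul (Nat.mul_le_mul e1 e2) (Nat.mul_le_mul_right _ e3)
  calc d * (JC (t + 1) * ((k + 1) * s.factorial))
      < d * ((d ^ t * PR s t) * (((s + t + 1)) * s.factorial)) := by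
        exact Nat.mul_lt_mul_of_le_of_lt le_rfl (lt_of_lt_of_le h1 h2) hdpos
    _ = d ^ (t + 1) * (t + 1 + s).factorial := by rw [hfact]; ring

lemma FTR_step (l : Multiset ℕ) (r k d : ℕ) (hr : 1 < r) (hk : 1 ≤ k)
    (hcount : l.count r = k) (hd : 3 ≤ d)
    (hc : (r = 2 ∧ 5 ≤ k) ∨ (r = 4 ∧ 2 ≤ k) ∨ r = 3 ∨ 5 ≤ r) :
    FTR (r ::ₘ l) d < FTR l d := by
  have hdpos : 0 < d := by omega
  have hrl : r ∈ l := by rw [← Multiset.count_pos, hcount]; omega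
  have hmem : r ∈ l.toFinset := Multiset.mem_toFinset.2 hrl
  -- sum bound
  have hrepl : Multiset.replicate k r ≤ l := by
    rw [← Multiset.le_count_iff_replicate_le, hcount]
  have hs : r * k ≤ l.sum := by
    obtain ⟨u, rfl⟩ := Multiset.le_iff_exists_add.1 hrepl
    simp [Multiset.sum_replicate, mul_comm]
  set s := l.sum with hsdef
  set c := Multiset.card l with hcdef
  set P := (l.map JC).prod with hPdef
  set G := ∏ x ∈ l.toFinset.erase r, (l.count x).factorial with hGdef
  have hF : ∏ x ∈ l.toFinset, (l.count x).factorial = k.factorial * G := by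
    rw [← Finset.mul_prod_erase _ _ hmem, hcount]
  have hF' : ∏ x ∈ l.toFinset, ((r ::ₘ l).count x).factorial
      = (k + 1).factorial * G := by
    rw [← Finset.mul_prod_erase _ _ hmem, Multiset.count_cons_self, hcount]
    congr 1
    refine Finset.prod_congr rfl fun x hx => ?_
    rw [Multiset.count_cons_of_ne (Finset.ne_of_mem_erase hx)]
  have hPpos : 0 < P := Multiset.prod_pos (by
    intro x hx
    obtain ⟨y, _, rfl⟩ := Multiset.mem_map.1 hx
    exact JC_pos y)
  have hGpos : 0 < G := Finset.prod_pos fun x _ => Nat.factorial_pos _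
  rw [FTR, FTR, div_lt_div_iff₀ (by positivity) (by positivity),
    ← Nat.cast_mul, ← Nat.cast_mul, Nat.cast_lt]
  have htf : (r ::ₘ l).toFinset = l.toFinset := by
    rw [Multiset.toFinset_cons, Finset.insert_eq_self.2 hmem]
  rw [htf, hF', hF, Multiset.card_cons, Multiset.map_cons, Multiset.prod_cons,
    Multiset.sum_cons, ← hsdef, ← hcdef, ← hPdef]
  have key : d * (JC r * ((k + 1) * s.factorial)) < d ^ r * (r + s).factorial :=
    core d r k s hd hk (by omega) hs (JC_lt_main r k hk hc)
  have hC : 0 < d ^ c * P * G * k.factorial * d ^ s := by positivity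
  calc d ^ (c + 1) * (JC r * P) * ((k + 1).factorial * G) * (d ^ s * s.factorial)
      = (d ^ c * P * G * k.factorial * d ^ s)
          * (d * (JC r * ((k + 1) * s.factorial))) := by
        rw [Nat.factorial_succ]; ring
    _ < (d ^ c * P * G * k.factorial * d ^ s) * (d ^ r * (r + s).factorial) :=
        Nat.mul_lt_mul_of_le_of_lt le_rfl key hC
    _ = d ^ c * P * (k.factorial * G) * (d ^ (r + s) * (r + s).factorial) := by
        rw [pow_add]; ring

lemma pow3 (m : ℕ) (h : 2 ≤ m) : m + 2 < 3 ^ m := by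
  induction m with
  | zero => omega
  | succ n ih =>
    rcases Nat.lt_or_ge n 2 with h2 | h2
    · interval_cases n <;> simp <;> omega
    · have h3 := ih h2
      have h4 : 3 ^ (n + 1) = 3 * 3 ^ n := by ring
      omega

lemma JC_lt_base (r : ℕ) (h : r = 7 ∨ r = 9 ∨ 10 ≤ r) :
    JC r < 3 ^ (r - 1) * r.factorial := by
  have hgen : ∀ u : ℕ, u = 10 ∨ u = 11 ∨ 13 ≤ u → JC u < 3 ^ (u - 1) * u.factorial := by
    intro u hu
    have hu3 : 3 ≤ u := by omega
    rw [JC_generic u hu, Nat.factorial_succ]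
    have h1 : u + 1 < 3 ^ (u - 1) := by
      have := pow3 (u - 1) (by omega)
      omega
    exact Nat.mul_lt_mul_of_lt_of_le h1 le_rfl (Nat.factorial_pos u)
  rcases h with rfl | rfl | h10
  · norm_num [JC, Nat.factorial]
  · norm_num [JC, Nat.factorial]
  · rcases Nat.lt_or_ge r 13 with h13 | h13
    · have : r = 10 ∨ r = 11 ∨ r = 12 := by omega
      rcases this with rfl | rfl | rfl
      · exact hgen 10 (by omega)
      · exact hgen 11 (by omega)
      · norm_num [JC, Nat.factorial]
    · exact hgen r (by omega)

lemma FTR_repl_lt_one (r d : ℕ) (hr : r = 7 ∨ r = 9 ∨ 10 ≤ r) (hd : 3 ≤ d) :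
    ∀ k, 1 ≤ k → FTR (Multiset.replicate k r) d < 1 := by
  have hr5 : 5 ≤ r := by omega
  have hdpos : 0 < d := by omega
  intro k hk
  induction k with
  | zero => omega
  | succ n ih =>
    rcases Nat.lt_or_ge n 1 with h1 | h1
    · -- n = 0 : base case, replicate 1 r = {r}
      have : n = 0 := by omega
      subst this
      have hone : Multiset.replicate 1 r = {r} := Multiset.replicate_one r
      rw [hone, FTR]
      simp only [Multiset.card_singleton, Multiset.map_singleton,
        Multiset.prod_singleton, Multiset.sum_singleton,
        Multiset.toFinset_singleton, Finset.prod_singleton,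
        Multiset.count_singleton_self, Nat.factorial_one, pow_one, mul_one]
      rw [div_lt_one (by positivity)]
      have key : d * JC r < d ^ r * r.factorial := by
        obtain ⟨t, rfl⟩ : ∃ t, r = t + 1 := ⟨r - 1, by omega⟩
        calc d * JC (t + 1) < d * (3 ^ t * (t + 1).factorial) := by
              have := JC_lt_base (t + 1) hr
              simp only [Nat.add_sub_cancel] at this
              exact Nat.mul_lt_mul_of_le_of_lt le_rfl this hdpos
          _ ≤ d * (d ^ t * (t + 1).factorial) :=
              Nat.mul_le_mul_left _
                (Nat.mul_le_mul_right _ (Nat.pow_le_pow_left hd t))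
          _ = d ^ (t + 1) * (t + 1).factorial := by rw [pow_succ]; ring
      exact_mod_cast key
    · rw [Multiset.replicate_succ]
      refine lt_trans (FTR_step (Multiset.replicate n r) r n d (by omega) h1
        (Multiset.count_replicate_self r n) hd (by omega)) (ih h1)

/-- inserting one more copy of an entry `r₀ > 1` strictly decreases the
Fermat-test ratio under suitable conditions; consequently `R(r₀^{k₀},d) < 1` for
`r₀ ∉ {2,3,4,5,6,8}`. -/
theorem FTR_insert_decreases
    (l : Multiset ℕ) (hl : IsSubdegreeSeq l)
    (r₀ k₀ : ℕ) (hr₀ : 1 < r₀) (hk₀ : 1 ≤ k₀) (hcount : l.count r₀ = k₀)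
    (d : ℕ) (hd : 3 ≤ d) :
    (((r₀ = 2 ∧ 5 ≤ k₀) ∨ (r₀ = 4 ∧ 2 ≤ k₀) ∨ r₀ = 3 ∨ 5 ≤ r₀) →
      FTR (r₀ ::ₘ l) d < FTR l d) ∧
    ((l = Multiset.replicate k₀ r₀ ∧ r₀ ∉ ({2, 3, 4, 5, 6, 8} : Set ℕ)) →
      FTR l d < 1) := by
  constructor
  · intro hc
    exact FTR_step l r₀ k₀ d hr₀ hk₀ hcount hd hc
  · rintro ⟨rfl, hset⟩
    simp only [Set.mem_insert_iff, Set.mem_singleton_iff, not_or] at hset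
    exact FTR_repl_lt_one r₀ d (by omega) hd k₀ hk₀
end

section
/- Let l be a subdegree sequence, let a ≥ 0 be the multiplicity of the entry 1 in l, and let d ≥ 3 be an integer. Then: (1) R(l,d) < 106; (2) if l has at least two distinct entries, then R(l,d) < 60; (3) if a ≥ 1 then R(l,d) < 11, and if a ≥ 2 then R(l,d) < 3. -/
/-!
As every entry is positive, `v(l) ≥ s`, so `R(l,d)` is nonincreasing in `d` and it suffices to
take `d = 3`. Adding an entry `x ≥ 2` to a sequence `t` multiplies `R(·,3)` by
`3 JC(x) (k+1) / (3^x x! C(x + v(t), x))`, where `k` is the multiplicity of `x` in `t`; since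
`(k+1) x ≤ x + v(t)`, this factor is at most `1` as soon as the new total degree is at least `11`.
So for sequences without entries `1` every bound descends to the finitely many sequences of
total degree at most `10`, which are checked by computation. Entries `1` contribute exactly:
`R(1^a ⊔ t, d) = R(t, d) / C(v(t) + a, a)`, and the bounds `11 (v+1)` and `3 C(v+2, 2)` on
`R(t,3)` for `1`-free `t` give the last two claims.
-/

open Multiset
open scoped Nat

def ftrNum (l : Multiset ℕ) (d : ℕ) : ℕ :=
  d ^ card l * (l.map JC).prod * ∏ x ∈ l.toFinset, (l.count x)!

def ftrDen (l : Multiset ℕ) (d : ℕ) : ℕ := d ^ l.sum * l.sum !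

theorem FTR_eq_div (l : Multiset ℕ) (d : ℕ) : FTR l d = ftrNum l d / ftrDen l d := rfl

theorem FTR_nonneg (l : Multiset ℕ) (d : ℕ) : 0 ≤ FTR l d := by
  unfold FTR; positivity

theorem ftrDen_pos (l : Multiset ℕ) {d : ℕ} (hd : 0 < d) : 0 < ftrDen l d := by
  unfold ftrDen; positivity

theorem FTR_lt_iff {l : Multiset ℕ} {d : ℕ} (hd : 0 < d) (c : ℕ) :
    FTR l d < c ↔ ftrNum l d < c * ftrDen l d := by
  rw [FTR_eq_div, div_lt_iff₀ (by exact_mod_cast ftrDen_pos l hd)]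
  norm_cast

theorem pow_mul_pow_le_pow_mul_pow {a b s v : ℕ} (hab : a ≤ b) (hsv : s ≤ v) :
    b ^ s * a ^ v ≤ a ^ s * b ^ v := by
  obtain ⟨r, rfl⟩ := Nat.exists_eq_add_of_le hsv
  calc b ^ s * a ^ (s + r) = a ^ s * (b ^ s * a ^ r) := by ring
    _ ≤ a ^ s * (b ^ s * b ^ r) := by gcongr
    _ = a ^ s * b ^ (s + r) := by ring

theorem FTR_le_FTR_of_le {l : Multiset ℕ} (hl : ∀ x ∈ l, 0 < x) {d e : ℕ} (hd : 0 < d)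
    (hde : d ≤ e) : FTR l e ≤ FTR l d := by
  have hsv : card l ≤ l.sum := by simpa using card_nsmul_le_sum hl
  rw [FTR_eq_div, FTR_eq_div, div_le_div_iff₀ (by exact_mod_cast ftrDen_pos l (hd.trans_le hde))
    (by exact_mod_cast ftrDen_pos l hd)]
  norm_cast
  unfold ftrNum ftrDen
  set P := (l.map JC).prod * ∏ x ∈ l.toFinset, (l.count x)!
  calc _ = (e ^ card l * d ^ l.sum) * (P * l.sum !) := by ring
    _ ≤ (d ^ card l * e ^ l.sum) * (P * l.sum !) :=
        Nat.mul_le_mul_right _ (pow_mul_pow_le_pow_mul_pow hde hsv)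
    _ = _ := by ring

theorem prod_factorial_count_cons {α : Type*} [DecidableEq α] (x : α) (t : Multiset α) :
    ∏ y ∈ (x ::ₘ t).toFinset, ((x ::ₘ t).count y)!
      = (t.count x + 1) * ∏ y ∈ t.toFinset, (t.count y)! := by
  have hx := Finset.mem_insert_self x t.toFinset
  have hext : ∏ y ∈ t.toFinset, (t.count y)! = ∏ y ∈ insert x t.toFinset, (t.count y)! :=
    Finset.prod_subset (Finset.subset_insert _ _) fun y _ hy => by
      rw [count_eq_zero.2 (by simpa using hy), Nat.factorial_zero]
  rw [toFinset_cons, hext, ← Finset.mul_prod_erase _ _ hx, ← Finset.mul_prod_erase _ _ hx,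
    Finset.prod_congr rfl fun y hy => by rw [count_cons_of_ne (Finset.ne_of_mem_erase hy)],
    count_cons_self, Nat.factorial_succ, mul_assoc]

theorem ftrNum_cons (x : ℕ) (t : Multiset ℕ) (d : ℕ) :
    ftrNum (x ::ₘ t) d = d * JC x * (t.count x + 1) * ftrNum t d := by
  simp only [ftrNum, card_cons, map_cons, prod_cons, prod_factorial_count_cons, pow_succ]
  ring

theorem ftrDen_cons (x : ℕ) (t : Multiset ℕ) (d : ℕ) :
    ftrDen (x ::ₘ t) d = d ^ x * x ! * (x + t.sum).choose x * ftrDen t d := by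
  simp only [ftrDen, sum_cons, ← Nat.add_choose_mul_factorial_mul_factorial x, pow_add]
  rw [Nat.choose_symm_add]
  ring

theorem FTR_cons (x : ℕ) (t : Multiset ℕ) {d : ℕ} (hd : 0 < d) :
    FTR (x ::ₘ t) d
      = FTR t d * (d * JC x * (t.count x + 1)) / (d ^ x * x ! * (x + t.sum).choose x) := by
  have hden := ftrDen_pos t hd
  have hchoose : 0 < (x + t.sum).choose x := Nat.choose_pos (by omega)
  rw [FTR_eq_div, FTR_eq_div, ftrNum_cons, ftrDen_cons]
  push_cast
  field_simp

theorem FTR_one_cons (t : Multiset ℕ) {d : ℕ} (hd : 0 < d) :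
    FTR (1 ::ₘ t) d = FTR t d * (t.count 1 + 1) / (t.sum + 1) := by
  rw [FTR_cons 1 t hd]
  simp only [JC, Nat.cast_one, pow_one, Nat.factorial_one, Nat.choose_one_right]
  push_cast
  field_simp
  ring

theorem FTR_replicate_one_add {t : Multiset ℕ} (ht : t.count 1 = 0) {d : ℕ} (hd : 0 < d)
    (a : ℕ) :
    FTR (replicate a 1 + t) d = FTR t d / (t.sum + a).choose a := by
  induction a with
  | zero => simp
  | succ a ih =>
    have hpascal : ((t.sum + a + 1).choose (a + 1) : ℚ) * (a + 1)
        = (t.sum + a + 1) * (t.sum + a).choose a := by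
      exact_mod_cast (Nat.add_one_mul_choose_eq (t.sum + a) a).symm
    have hchoose : 0 < (t.sum + a).choose a := Nat.choose_pos (by omega)
    have hchoose' : 0 < (t.sum + a + 1).choose (a + 1) := Nat.choose_pos (by omega)
    rw [replicate_succ, cons_add, FTR_one_cons _ hd, ih, count_add, count_replicate_self, ht,
      sum_add, sum_replicate, smul_eq_mul, mul_one, add_zero, add_comm a t.sum, ← add_assoc,
      div_mul_eq_mul_div, div_div, div_eq_div_iff (by positivity) (by positivity), Nat.cast_add]
    linear_combination FTR t d * hpascal

theorem FTR_eq_div_choose (l : Multiset ℕ) {d : ℕ} (hd : 0 < d) :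
    FTR l d = FTR (l.filter (· ≠ 1)) d
      / ((l.filter (· ≠ 1)).sum + l.count 1).choose (l.count 1) := by
  conv_lhs => rw [← filter_add_not (· = 1) l, filter_eq']
  exact FTR_replicate_one_add (by simp) hd _

theorem count_mul_le_sum (l : Multiset ℕ) (x : ℕ) : l.count x * x ≤ l.sum := by
  obtain ⟨u, hu⟩ := Multiset.le_iff_exists_add.1 (le_count_iff_replicate_le.1 le_rfl :
    replicate (l.count x) x ≤ l)
  have hsum := congrArg Multiset.sum hu
  rw [sum_add, sum_replicate, smul_eq_mul] at hsum
  omega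

theorem three_mul_JC_le_of_twelve_le {x : ℕ} (hx : 12 ≤ x) : 3 * JC x ≤ 3 ^ x * x ! := by
  obtain ⟨n, rfl⟩ := Nat.exists_eq_add_of_le' hx
  rcases n with _ | n
  · decide
  have hpow : n + 11 < 3 ^ (n + 11) := Nat.lt_pow_self (by norm_num)
  calc 3 * JC (n + 1 + 12) = 3 * (n + 14) * (n + 13)! := by
        rw [show JC (n + 1 + 12) = (n + 14)! from rfl, Nat.factorial_succ]; ring
    _ ≤ 3 * (3 * 3 ^ (n + 11)) * (n + 13)! := by gcongr; omega
    _ = 3 ^ (n + 1 + 12) * (n + 1 + 12)! := by ring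

-- Equality at `x = 2`; this is what forces total degree `11` in `FTR_three_cons_le`.
theorem three_mul_JC_le_mul_choose {x n : ℕ} (hx : 2 ≤ x) (hn : 10 ≤ n) (hxn : x ≤ n + 1) :
    3 * JC x ≤ 3 ^ x * x ! * n.choose (x - 1) := by
  rcases le_or_gt x 11 with hx11 | hx11
  · calc 3 * JC x ≤ 3 ^ x * x ! * (10).choose (x - 1) := by interval_cases x <;> decide
      _ ≤ 3 ^ x * x ! * n.choose (x - 1) := by gcongr
  · calc 3 * JC x ≤ 3 ^ x * x ! := three_mul_JC_le_of_twelve_le hx11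
      _ ≤ 3 ^ x * x ! * n.choose (x - 1) := Nat.le_mul_of_pos_right _ (Nat.choose_pos (by omega))

theorem mul_choose_le_choose_succ {k m y : ℕ} (h : k * (y + 1) ≤ m + 1) :
    k * m.choose y ≤ (m + 1).choose (y + 1) := by
  refine Nat.le_of_mul_le_mul_right ?_ (Nat.succ_pos y)
  calc k * m.choose y * (y + 1) = k * (y + 1) * m.choose y := by ring
    _ ≤ (m + 1) * m.choose y := by gcongr
    _ = (m + 1).choose (y + 1) * (y + 1) := Nat.add_one_mul_choose_eq m y

theorem three_mul_JC_mul_le {x k n : ℕ} (hx : 2 ≤ x) (hn : 11 ≤ n) (hk : k * x ≤ n) :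
    3 * JC x * k ≤ 3 ^ x * x ! * n.choose x := by
  rcases k.eq_zero_or_pos with rfl | hk0
  · simp
  obtain ⟨y, rfl⟩ : ∃ y, x = y + 1 := ⟨x - 1, by omega⟩
  obtain ⟨m, rfl⟩ : ∃ m, n = m + 1 := ⟨n - 1, by omega⟩
  have hxn : y + 1 ≤ m + 1 := (Nat.le_mul_of_pos_left _ hk0).trans hk
  calc 3 * JC (y + 1) * k ≤ 3 ^ (y + 1) * (y + 1)! * m.choose y * k :=
        Nat.mul_le_mul_right _ (by simpa using three_mul_JC_le_mul_choose hx (by omega) hxn)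
    _ = 3 ^ (y + 1) * (y + 1)! * (k * m.choose y) := by ring
    _ ≤ 3 ^ (y + 1) * (y + 1)! * (m + 1).choose (y + 1) := by
        gcongr; exact mul_choose_le_choose_succ hk

theorem FTR_three_cons_le {x : ℕ} {t : Multiset ℕ} (hx : 2 ≤ x) (hs : 11 ≤ x + t.sum) :
    FTR (x ::ₘ t) 3 ≤ FTR t 3 := by
  have hcount := count_mul_le_sum (x ::ₘ t) x
  rw [count_cons_self, sum_cons] at hcount
  have hkey : ((3 * JC x * (t.count x + 1) : ℕ) : ℚ)
      ≤ (3 ^ x * x ! * (x + t.sum).choose x : ℕ) := by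
    exact_mod_cast three_mul_JC_mul_le hx hs hcount
  have hchoose : 0 < (x + t.sum).choose x := Nat.choose_pos (by omega)
  push_cast at hkey
  rw [FTR_cons x t three_pos, div_le_iff₀ (by positivity)]
  exact mul_le_mul_of_nonneg_left hkey (FTR_nonneg t 3)

def forallSeqsBounded (p : Multiset ℕ → Bool) : ℕ → ℕ → Bool
  | 0, _ | 1, _ => p 0
  | m + 2, n => (List.range (n / (m + 2) + 1)).all fun k =>
      forallSeqsBounded (fun t => p (replicate k (m + 2) + t)) (m + 1) (n - k * (m + 2))

theorem forallSeqsBounded_spec :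
    ∀ {m n : ℕ} {p : Multiset ℕ → Bool}, forallSeqsBounded p m n = true →
      ∀ l : Multiset ℕ, (∀ x ∈ l, 2 ≤ x ∧ x ≤ m) → l.sum ≤ n → p l = true
  | 0, _, _, h, l, hl, _ | 1, _, _, h, l, hl, _ => by
    rwa [eq_zero_of_forall_notMem (s := l) fun x hx => by have := hl x hx; omega]
  | m + 2, n, p, h, l, hl, hs => by
    set k := l.count (m + 2)
    have hsplit : replicate k (m + 2) + l.filter (· ≠ m + 2) = l := by
      rw [← filter_eq', filter_add_not]
    have hsum : k * (m + 2) + (l.filter (· ≠ m + 2)).sum = l.sum := by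
      rw [← hsplit, sum_add, sum_replicate, smul_eq_mul, hsplit]
    simp only [forallSeqsBounded, List.all_eq_true, List.mem_range, Nat.lt_succ_iff] at h
    rw [← hsplit]
    refine forallSeqsBounded_spec (h k ((Nat.le_div_iff_mul_le (by omega)).2 (by omega))) _
      (fun x hx => ?_) (by omega)
    obtain ⟨hxl, hxm⟩ := mem_filter.1 hx
    have := hl x hxl
    omega

theorem FTR_three_bounds_of_sum_le_ten {l : Multiset ℕ} (hl : ∀ x ∈ l, 2 ≤ x)
    (hs : l.sum ≤ 10) :
    FTR l 3 < (106 : ℕ) ∧ (2 ≤ l.toFinset.card → FTR l 3 < (60 : ℕ)) ∧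
      FTR l 3 < (11 * (l.sum + 1) : ℕ) ∧ FTR l 3 < (3 * (l.sum + 2).choose 2 : ℕ) := by
  simp only [FTR_lt_iff three_pos]
  exact of_decide_eq_true <| forallSeqsBounded_spec (m := 10) (n := 10)
    (p := fun l => decide (ftrNum l 3 < 106 * ftrDen l 3 ∧
      (2 ≤ l.toFinset.card → ftrNum l 3 < 60 * ftrDen l 3) ∧
      ftrNum l 3 < 11 * (l.sum + 1) * ftrDen l 3 ∧
      ftrNum l 3 < 3 * (l.sum + 2).choose 2 * ftrDen l 3))
    (by decide) l (fun x hx => ⟨hl x hx, (le_sum_of_mem hx).trans hs⟩) hs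

theorem FTR_three_lt_of_sum_le_ten (B : ℕ → ℕ) (hB : Monotone B)
    (hsmall : ∀ l : Multiset ℕ, (∀ x ∈ l, 2 ≤ x) → l.sum ≤ 10 → FTR l 3 < B l.sum)
    (l : Multiset ℕ) (hl : ∀ x ∈ l, 2 ≤ x) : FTR l 3 < B l.sum := by
  induction l using Multiset.induction_on with
  | empty => exact hsmall 0 hl (by simp)
  | cons x t ih =>
    by_cases hs : (x ::ₘ t).sum ≤ 10
    · exact hsmall _ hl hs
    rw [sum_cons] at hs ⊢
    calc FTR (x ::ₘ t) 3 ≤ FTR t 3 := FTR_three_cons_le (hl x (mem_cons_self x t)) (by omega)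
      _ < B t.sum := ih fun y hy => hl y (mem_cons_of_mem hy)
      _ ≤ B (x + t.sum) := by exact_mod_cast hB (Nat.le_add_left _ _)

theorem FTR_three_lt_106 {l : Multiset ℕ} (hl : ∀ x ∈ l, 2 ≤ x) : FTR l 3 < 106 := by
  exact_mod_cast FTR_three_lt_of_sum_le_ten (fun _ => 106) monotone_const
    (fun _ hl hs => (FTR_three_bounds_of_sum_le_ten hl hs).1) l hl

theorem FTR_three_lt_eleven_mul {l : Multiset ℕ} (hl : ∀ x ∈ l, 2 ≤ x) :
    FTR l 3 < (11 * (l.sum + 1) : ℕ) :=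
  FTR_three_lt_of_sum_le_ten (fun v => 11 * (v + 1)) (fun _ _ h => by dsimp; omega)
    (fun _ hl hs => (FTR_three_bounds_of_sum_le_ten hl hs).2.2.1) l hl

theorem FTR_three_lt_three_mul_choose {l : Multiset ℕ} (hl : ∀ x ∈ l, 2 ≤ x) :
    FTR l 3 < (3 * (l.sum + 2).choose 2 : ℕ) :=
  FTR_three_lt_of_sum_le_ten (fun v => 3 * (v + 2).choose 2)
    (fun _ _ h => Nat.mul_le_mul_left _ (Nat.choose_le_choose _ (by omega)))
    (fun _ hl hs => (FTR_three_bounds_of_sum_le_ten hl hs).2.2.2) l hl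

theorem FTR_three_singleton_lt {x : ℕ} (hx : 2 ≤ x) : FTR {x} 3 < 60 := by
  rcases le_or_gt x 10 with hx10 | hx10
  · have : FTR {x} 3 < (60 : ℕ) := by
      rw [FTR_lt_iff three_pos]
      interval_cases x <;> decide
    exact_mod_cast this
  · calc FTR {x} 3 ≤ FTR 0 3 := FTR_three_cons_le hx (by simp; omega)
      _ < 60 := by norm_num [FTR]

theorem exists_cons_two_le_card_toFinset {α : Type*} [DecidableEq α] {s : Multiset α}
    (h2 : 2 ≤ s.toFinset.card) (h3 : 3 ≤ card s) :
    ∃ x t, s = x ::ₘ t ∧ 2 ≤ t.toFinset.card := by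
  obtain ⟨a, ha, b, hb, hab⟩ := Finset.one_lt_card.1 h2
  obtain ⟨u, rfl⟩ := exists_cons_of_mem (mem_toFinset.1 ha)
  obtain ⟨w, rfl⟩ := exists_cons_of_mem ((mem_cons.1 (mem_toFinset.1 hb)).resolve_left hab.symm)
  obtain ⟨c, hc⟩ := card_pos_iff_exists_mem.1 (by simp at h3; omega : 0 < card w)
  obtain ⟨v, rfl⟩ := exists_cons_of_mem hc
  refine ⟨c, a ::ₘ b ::ₘ v, by rw [cons_swap b c, cons_swap a c], ?_⟩
  exact Finset.one_lt_card.2 ⟨a, by simp, b, by simp, hab⟩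

theorem FTR_three_lt_60 (l : Multiset ℕ) (hl : ∀ x ∈ l, 2 ≤ x)
    (h2 : 2 ≤ l.toFinset.card) : FTR l 3 < 60 := by
  induction l using Multiset.strongInductionOn with
  | ih l ih =>
  by_cases hs : l.sum ≤ 10
  · exact_mod_cast (FTR_three_bounds_of_sum_le_ten hl hs).2.1 h2
  rcases (h2.trans (toFinset_card_le l)).eq_or_lt with hcard | hcard
  · obtain ⟨a, b, rfl⟩ := card_eq_two.1 hcard.symm
    calc FTR (a ::ₘ {b}) 3 ≤ FTR {b} 3 :=
          FTR_three_cons_le (hl a (by simp)) (by simp at hs ⊢; omega)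
      _ < 60 := FTR_three_singleton_lt (hl b (by simp))
  · obtain ⟨x, t, rfl, ht⟩ := exists_cons_two_le_card_toFinset h2 hcard
    rw [sum_cons] at hs
    calc FTR (x ::ₘ t) 3 ≤ FTR t 3 := FTR_three_cons_le (hl x (mem_cons_self x t)) (by omega)
      _ < 60 := ih t (lt_cons_self t x) (fun y hy => hl y (mem_cons_of_mem hy)) ht

theorem choose_add_le_choose_add {v a b : ℕ} (hab : a ≤ b) :
    (v + a).choose a ≤ (v + b).choose b := by
  rw [← Nat.choose_symm_add, ← Nat.choose_symm_add]
  exact Nat.choose_le_choose v (by omega)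

theorem two_le_of_count_one_eq_zero {l : Multiset ℕ} (hl : ∀ x ∈ l, 0 < x)
    (h0 : l.count 1 = 0) : ∀ x ∈ l, 2 ≤ x := fun x hx => by
  have := hl x hx
  have : x ≠ 1 := by rintro rfl; exact count_ne_zero.2 hx h0
  omega

theorem two_le_of_mem_filter_ne_one {l : Multiset ℕ} (hl : ∀ x ∈ l, 0 < x) :
    ∀ x ∈ l.filter (· ≠ 1), 2 ≤ x :=
  two_le_of_count_one_eq_zero (fun x hx => hl x (mem_of_mem_filter hx)) (by simp)

theorem FTR_three_le_div_choose {l : Multiset ℕ} {k : ℕ} (hk : k ≤ l.count 1) :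
    FTR l 3 ≤ FTR (l.filter (· ≠ 1)) 3 / ((l.filter (· ≠ 1)).sum + k).choose k := by
  rw [FTR_eq_div_choose l three_pos]
  exact div_le_div_of_nonneg_left (FTR_nonneg _ 3) (by exact_mod_cast Nat.choose_pos (by omega))
    (by exact_mod_cast choose_add_le_choose_add hk)

theorem FTR_three_lt_eleven {l : Multiset ℕ} (hl : ∀ x ∈ l, 0 < x) (h1 : 1 ≤ l.count 1) :
    FTR l 3 < 11 := by
  have hfree := FTR_three_lt_eleven_mul (two_le_of_mem_filter_ne_one hl)
  refine (FTR_three_le_div_choose h1).trans_lt ?_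
  rw [Nat.choose_one_right, div_lt_iff₀ (by positivity)]
  exact_mod_cast hfree

theorem FTR_three_lt_three {l : Multiset ℕ} (hl : ∀ x ∈ l, 0 < x) (h2 : 2 ≤ l.count 1) :
    FTR l 3 < 3 := by
  have hfree := FTR_three_lt_three_mul_choose (two_le_of_mem_filter_ne_one hl)
  refine (FTR_three_le_div_choose h2).trans_lt ?_
  rw [div_lt_iff₀ (by exact_mod_cast Nat.choose_pos (by omega))]
  exact_mod_cast hfree

/-- uniform bounds on the Fermat-test ratio, in terms of the multiplicity
`a` of the entry `1`. -/
theorem FTR_uniform_bounds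
    (l : Multiset ℕ) (hl : IsSubdegreeSeq l)
    (d : ℕ) (hd : 3 ≤ d) :
    FTR l d < 106 ∧
    (2 ≤ l.toFinset.card → FTR l d < 60) ∧
    (1 ≤ l.count 1 → FTR l d < 11) ∧
    (2 ≤ l.count 1 → FTR l d < 3) := by
  have hpos := hl.2
  have hle : FTR l d ≤ FTR l 3 := FTR_le_FTR_of_le hpos three_pos hd
  refine ⟨hle.trans_lt ?_, fun h2 => hle.trans_lt ?_,
    fun h1 => hle.trans_lt (FTR_three_lt_eleven hpos h1),
    fun h2 => hle.trans_lt (FTR_three_lt_three hpos h2)⟩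
  all_goals rcases (l.count 1).eq_zero_or_pos with h0 | h1
  · exact FTR_three_lt_106 (two_le_of_count_one_eq_zero hpos h0)
  · linarith [FTR_three_lt_eleven hpos h1]
  · exact FTR_three_lt_60 l (two_le_of_count_one_eq_zero hpos h0) h2
  · linarith [FTR_three_lt_eleven hpos h1]
end
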